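/- Let W : □_2 → V(K)⁺ be an affine map of the square into a positive cone. If W is degenerate, i.e., the affine dimension of W(□_2) is at most 1, then W is entanglement breaking. -/

import Mathlib

def Square : Set ((Fin 2 → ℝ) × (Fin 2 → ℝ)) :=
  (stdSimplex ℝ (Fin 2)) ×ˢ (stdSimplex ℝ (Fin 2))

def sqVert (i j : Fin 2) : (Fin 2 → ℝ) × (Fin 2 → ℝ) := (Pi.single i 1, Pi.single j 1)

def coneOf {E : Type*} [AddCommGroup E] [Module ℝ E] (K : Set E) : Set E :=
  {v | ∃ c : ℝ, 0 ≤ c ∧ ∃ x ∈ K, v = c • x}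

def IsAffineOn {E V : Type*} [AddCommGroup E] [Module ℝ E] [AddCommGroup V] [Module ℝ V]
    (C : Set E) (f : E → V) : Prop :=
  ∀ x ∈ C, ∀ y ∈ C, ∀ a b : ℝ, 0 ≤ a → 0 ≤ b → a + b = 1 →
    f (a • x + b • y) = a • f x + b • f y

/-!
Affinity at the centre of the square gives the parallelogram law `w₀₀ + w₁₁ = w₀₁ + w₁₀` for the
vertex images, so on the common line they are parametrised additively, `w i j = p + (a i + b j) • d`.
After swapping the labels so that `a` and `b` increase, `w₀₀` and `w₁₁` are the endpoints of the
segment and the off-diagonal images are `θ • w₁₁ + (1 - θ) • w₀₀` and `θ • w₀₀ + (1 - θ) • w₁₁`;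
then `ψ⁰ i = θ • w i i` and `ψ¹ j = (1 - θ) • w j j` work.
-/

def IsEntanglementBreaking {E ι κ : Type*} [Add E] (C : Set E) (w : ι → κ → E) : Prop :=
  ∃ ψ0 : ι → E, ∃ ψ1 : κ → E, (∀ i, ψ0 i ∈ C) ∧ (∀ j, ψ1 j ∈ C) ∧ ∀ i j, w i j = ψ0 i + ψ1 j

lemma IsEntanglementBreaking.of_comp {E ι ι' κ κ' : Type*} [Add E] {C : Set E} {w : ι → κ → E}
    (σ : ι' ≃ ι) (τ : κ' ≃ κ) (h : IsEntanglementBreaking C fun i j => w (σ i) (τ j)) :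
    IsEntanglementBreaking C w := by
  obtain ⟨ψ0, ψ1, h0, h1, hw⟩ := h
  refine ⟨ψ0 ∘ σ.symm, ψ1 ∘ τ.symm, fun i => h0 _, fun j => h1 _, fun i j => ?_⟩
  simpa using hw (σ.symm i) (τ.symm j)

section

variable {E : Type*} [AddCommGroup E] [Module ℝ E]

lemma smul_mem_coneOf {K : Set E} {c : ℝ} (hc : 0 ≤ c) {v : E} (hv : v ∈ coneOf K) :
    c • v ∈ coneOf K := by
  obtain ⟨c', hc', x, hx, rfl⟩ := hv
  exact ⟨c * c', mul_nonneg hc hc', x, hx, smul_smul c c' x⟩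

lemma isEntanglementBreaking_of_offDiag_eq_convexComb {K : Set E} {w : Fin 2 → Fin 2 → E}
    (hdiag : ∀ i, w i i ∈ coneOf K) {θ : ℝ} (hθ : θ ∈ Set.Icc (0 : ℝ) 1)
    (h10 : w 1 0 = θ • w 1 1 + (1 - θ) • w 0 0) (h01 : w 0 1 = θ • w 0 0 + (1 - θ) • w 1 1) :
    IsEntanglementBreaking (coneOf K) w := by
  refine ⟨fun i => θ • w i i, fun j => (1 - θ) • w j j,
    fun i => smul_mem_coneOf hθ.1 (hdiag i), fun j => smul_mem_coneOf (by linarith [hθ.2]) (hdiag j),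
    ?_⟩
  simp only [Fin.forall_fin_two]
  exact ⟨⟨by module, h01⟩, h10, by module⟩

lemma exists_mem_Icc_eq_mul_add {A B : ℝ} (hA : 0 ≤ A) (hB : 0 ≤ B) :
    ∃ θ ∈ Set.Icc (0 : ℝ) 1, A = θ * (A + B) := by
  rcases hA.eq_or_lt with rfl | hA
  · exact ⟨0, ⟨le_rfl, zero_le_one⟩, by ring⟩
  have hS : 0 < A + B := by linarith
  exact ⟨A / (A + B), ⟨by positivity, (div_le_one hS).2 (by linarith)⟩,
    (div_mul_cancel₀ A hS.ne').symm⟩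

lemma isEntanglementBreaking_of_eq_add_smul_of_monotone {K : Set E} {w : Fin 2 → Fin 2 → E}
    (hw : ∀ i j, w i j ∈ coneOf K) {p d : E} {a b : Fin 2 → ℝ}
    (hab : ∀ i j, w i j = p + (a i + b j) • d) (ha : a 0 ≤ a 1) (hb : b 0 ≤ b 1) :
    IsEntanglementBreaking (coneOf K) w := by
  obtain ⟨θ, hθ, hA⟩ := exists_mem_Icc_eq_mul_add (sub_nonneg.2 ha) (sub_nonneg.2 hb)
  refine isEntanglementBreaking_of_offDiag_eq_convexComb (fun i => hw i i) hθ ?_ ?_ <;>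
    simp only [hab] <;> match_scalars <;> linarith

lemma isEntanglementBreaking_of_eq_add_smul {K : Set E} {w : Fin 2 → Fin 2 → E}
    (hw : ∀ i j, w i j ∈ coneOf K) {p d : E} {a b : Fin 2 → ℝ}
    (hab : ∀ i j, w i j = p + (a i + b j) • d) :
    IsEntanglementBreaking (coneOf K) w :=
  .of_comp (Tuple.sort a) (Tuple.sort b) <|
    isEntanglementBreaking_of_eq_add_smul_of_monotone (fun _ _ => hw _ _) (fun _ _ => hab _ _)
      (Tuple.monotone_sort a zero_le_one) (Tuple.monotone_sort b zero_le_one)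

lemma exists_eq_add_smul_of_add_eq {w : Fin 2 → Fin 2 → E}
    (hpar : w 0 0 + w 1 1 = w 0 1 + w 1 0) {p q : E}
    (hline : ∀ i j, ∃ t : ℝ, w i j = p + t • (q - p)) :
    ∃ a b : Fin 2 → ℝ, ∀ i j, w i j = p + (a i + b j) • (q - p) := by
  choose t ht using hline
  refine ⟨fun i => t i 0, fun j => t 0 j - t 0 0, ?_⟩
  have h11 : w 1 1 = w 0 1 + w 1 0 - w 0 0 := eq_sub_of_add_eq' hpar
  simp only [Fin.forall_fin_two, h11]
  simp only [ht]
  refine ⟨⟨?_, ?_⟩, ?_, ?_⟩ <;> module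

end

lemma sqVert_mem_Square (i j : Fin 2) : sqVert i j ∈ Square :=
  ⟨single_mem_stdSimplex ℝ i, single_mem_stdSimplex ℝ j⟩

lemma sqVert_midpoint : (1 / 2 : ℝ) • sqVert 0 0 + (1 / 2 : ℝ) • sqVert 1 1
    = (1 / 2 : ℝ) • sqVert 0 1 + (1 / 2 : ℝ) • sqVert 1 0 := by
  refine Prod.ext ?_ ?_ <;> funext k <;> fin_cases k <;> simp [sqVert]

lemma IsAffineOn.sqVert_add {V : Type*} [AddCommGroup V] [Module ℝ V]
    {W : (Fin 2 → ℝ) × (Fin 2 → ℝ) → V} (hW : IsAffineOn Square W) :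
    W (sqVert 0 0) + W (sqVert 1 1) = W (sqVert 0 1) + W (sqVert 1 0) := by
  have hmid := hW _ (sqVert_mem_Square 0 0) _ (sqVert_mem_Square 1 1) (1 / 2) (1 / 2)
    (by norm_num) (by norm_num) (by norm_num)
  rw [sqVert_midpoint, hW _ (sqVert_mem_Square 0 1) _ (sqVert_mem_Square 1 0) (1 / 2) (1 / 2)
    (by norm_num) (by norm_num) (by norm_num), ← smul_add, ← smul_add] at hmid
  exact (smul_right_injective V (by norm_num : (1 / 2 : ℝ) ≠ 0) hmid).symm

theorem stmt_17_general {E : Type*} [NormedAddCommGroup E] [NormedSpace ℝ E]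
    (K : Set E)
    (W : ((Fin 2 → ℝ) × (Fin 2 → ℝ)) → E)
    (hW : IsAffineOn Square W) (hWpos : ∀ s ∈ Square, W s ∈ coneOf K)
    (hdeg : ∃ p q : E, ∀ s ∈ Square, ∃ t : ℝ, W s = p + t • (q - p)) :
    ∃ ψ0 ψ1 : Fin 2 → E,
      (∀ i, ψ0 i ∈ coneOf K) ∧ (∀ j, ψ1 j ∈ coneOf K) ∧
      ∀ i j : Fin 2, W (sqVert i j) = ψ0 i + ψ1 j := by
  obtain ⟨p, q, hline⟩ := hdeg
  obtain ⟨a, b, hab⟩ := exists_eq_add_smul_of_add_eq hW.sqVert_add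
    fun i j => hline _ (sqVert_mem_Square i j)
  exact isEntanglementBreaking_of_eq_add_smul (fun i j => hWpos _ (sqVert_mem_Square i j)) hab

/-- if an affine map `W : □_2 → V(K)⁺` is degenerate (its image has
affine dimension at most 1, i.e. lies on a line), then `W` is entanglement
breaking, i.e. its vertex images decompose as `w_{i,j} = ψ^0_i + ψ^1_j` with
`ψ^0_i, ψ^1_j ∈ V(K)⁺`. -/
theorem stmt_17 {E : Type*} [NormedAddCommGroup E] [NormedSpace ℝ E] [FiniteDimensional ℝ E]
    (K : Set E) (hK : Convex ℝ K) (hKc : IsCompact K) (h0 : (0 : E) ∉ K)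
    (W : ((Fin 2 → ℝ) × (Fin 2 → ℝ)) → E)
    (hW : IsAffineOn Square W) (hWpos : ∀ s ∈ Square, W s ∈ coneOf K)
    (hdeg : ∃ p q : E, ∀ s ∈ Square, ∃ t : ℝ, W s = p + t • (q - p)) :
    ∃ ψ0 ψ1 : Fin 2 → E,
      (∀ i, ψ0 i ∈ coneOf K) ∧ (∀ j, ψ1 j ∈ coneOf K) ∧
      ∀ i j : Fin 2, W (sqVert i j) = ψ0 i + ψ1 j :=
  stmt_17_general K W hW hWpos hdeg
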